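/- arXiv:1708.01473 — 5 statements merged into one kernel-verified Lean document; each statement's English description precedes it below -/
import Mathlib

section
/- If a set P of constrained Horn clauses over C has an A-definable model Σ, then P is D-satisfiable; in particular, the D-interpretation M = { p(a1,…,am) | (a1,…,am) ∈ U^m and D ⊨ Σ(p(X1,…,Xm)) under the assignment Xi ↦ ai } is a D-model of P. -/
namespace CHC

variable {V U PS : Type}

/-- Variable assignments into the universe `U` of the canonical interpretation `D`. -/
abbrev Assign (V U : Type) : Type := V → U

/-- Semantic formulas: a formula (in particular a constraint of `C`) is identified with
the set of assignments satisfying it in the canonical interpretation `D`. -/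
abbrev Form (V U : Type) : Type := Assign V U → Prop

/-- `φ` depends only on the variables in `S` (a semantic rendering of
"the free variables of `φ` are contained in `S`"). -/
def DependsOn (φ : Form V U) (S : Set V) : Prop :=
  ∀ α β : Assign V U, (∀ x ∈ S, α x = β x) → (φ α ↔ φ β)

/-- An atom `p(X1,…,Xm)` with distinct variables `X1,…,Xm`. -/
structure Atom (V PS : Type) where
  pred : PS
  args : List V
  nodup : args.Nodup

def Atom.varset (A : Atom V PS) : Set V := {x | x ∈ A.args}

def bodyVars (G : List (Atom V PS)) : Set V := {x | ∃ A ∈ G, x ∈ A.args}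

/-- A constrained Horn clause `head ← constr, body`; `head = none` encodes `false`.
`cvars` records the (syntactic) variables of the constraint. -/
structure Clause (V U PS : Type) where
  head : Option (Atom V PS)
  constr : Form V U
  cvars : Set V
  hdep : DependsOn constr cvars
  body : List (Atom V PS)

def headVars : Option (Atom V PS) → Set V
  | none => ∅
  | some A => A.varset

def Clause.vars (C : Clause V U PS) : Set V :=
  C.cvars ∪ headVars C.head ∪ bodyVars C.body

def Clause.headPred (C : Clause V U PS) : Option PS := C.head.map Atom.pred

def Clause.preds (C : Clause V U PS) : Set PS :=
  {p | (∃ A, C.head = some A ∧ A.pred = p) ∨ (∃ A ∈ C.body, A.pred = p)}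

/-- The predicate symbols occurring in a set of clauses. -/
def predsOf (P : Set (Clause V U PS)) : Set PS := {p | ∃ C ∈ P, p ∈ C.preds}

/-- A `D`-interpretation: the symbols outside `Pred_u` are already interpreted by the
canonical interpretation (baked into semantic formulas), so only the user-defined
predicates need an interpretation. -/
abbrev Interp (U PS : Type) : Type := PS → List U → Prop

def Atom.sat (A : Atom V PS) (I : Interp U PS) (α : Assign V U) : Prop :=
  I A.pred (A.args.map α)

def headSat (I : Interp U PS) : Option (Atom V PS) → Assign V U → Prop
  | none, _ => False
  | some A, α => A.sat I α

def Clause.holds (C : Clause V U PS) (I : Interp U PS) : Prop :=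
  ∀ α : Assign V U, C.constr α → (∀ A ∈ C.body, A.sat I α) → headSat I C.head α

/-- `I` is a `D`-model of the set `P` of clauses. -/
def IsModel (I : Interp U PS) (P : Set (Clause V U PS)) : Prop :=
  ∀ C ∈ P, C.holds I

/-- `P` is `D`-satisfiable. -/
def Satisfiable (P : Set (Clause V U PS)) : Prop :=
  ∃ I : Interp U PS, IsModel I P

/-- The least `D`-model of a set of definite clauses. -/
def lm (P : Set (Clause V U PS)) : Interp U PS :=
  fun p as => ∀ I : Interp U PS, IsModel I P → I p as

/-- Renaming of an atom by a bijection on variables. -/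
def Atom.rename (σ : V ≃ V) (A : Atom V PS) : Atom V PS :=
  ⟨A.pred, A.args.map σ, A.nodup.map σ.injective⟩

/-- Renaming of a clause by a bijection on variables. -/
def Clause.rename (σ : V ≃ V) (C : Clause V U PS) : Clause V U PS where
  head := C.head.map (Atom.rename σ)
  constr := fun α => C.constr (α ∘ σ)
  cvars := σ '' C.cvars
  hdep := by
    intro α β h
    exact C.hdep (α ∘ σ) (β ∘ σ) (fun x hx => h (σ x) ⟨x, hx, rfl⟩)
  body := C.body.map (Atom.rename σ)

/-- Existential quantification of the variables in `Xs`. -/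
def exQ (Xs : Set V) (φ : Form V U) : Form V U :=
  fun α => ∃ β : Assign V U, (∀ x ∉ Xs, β x = α x) ∧ φ β

/-- The class `A^{∃∨}` of existentially quantified finite disjunctions of formulas of `𝒜`. -/
def AexOr (𝒜 : Set (Form V U)) : Set (Form V U) :=
  { ψ | ∃ (Xs : Finset V) (φs : List (Form V U)),
      φs ≠ [] ∧ (∀ φ ∈ φs, φ ∈ 𝒜) ∧ ψ = exQ (↑Xs) (fun α => ∃ φ ∈ φs, φ α) }

/-- `𝒜` contains `true`, `false` and equalities between (variable) terms,
and is closed under conjunction. -/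
def GoodConstraintSet (𝒜 : Set (Form V U)) : Prop :=
  (fun _ => True) ∈ 𝒜 ∧ (fun _ => False) ∈ 𝒜 ∧
  (∀ x y : V, (fun α => α x = α y) ∈ 𝒜) ∧
  (∀ φ ψ : Form V U, φ ∈ 𝒜 → ψ ∈ 𝒜 → (fun α => φ α ∧ ψ α) ∈ 𝒜)

/-- A symbolic interpretation: a function from atoms to `A^{∃∨}` whose value on an atom
depends only on the variables of the atom and which commutes with renamings. -/
structure SymbInterp (V U PS : Type) (𝒜 : Set (Form V U)) where
  val : Atom V PS → Form V U
  mem : ∀ A : Atom V PS, val A ∈ AexOr 𝒜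
  fvars : ∀ A : Atom V PS, DependsOn (val A) A.varset
  rename_eq : ∀ (A : Atom V PS) (σ : V ≃ V),
    val (Atom.rename σ A) = fun α => val A (α ∘ σ)

variable {𝒜 𝒞 : Set (Form V U)}

/-- Extension of a symbolic interpretation to conjunctions of atoms. -/
def SymbInterp.bodySat (Sg : SymbInterp V U PS 𝒜) (G : List (Atom V PS))
    (α : Assign V U) : Prop :=
  ∀ A ∈ G, Sg.val A α

/-- Extension of a symbolic interpretation to heads, with `Σ(false) = false`. -/
def SymbInterp.headSat (Sg : SymbInterp V U PS 𝒜) :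
    Option (Atom V PS) → Assign V U → Prop
  | none, _ => False
  | some A, α => Sg.val A α

/-- `Sg` is an `𝒜`-definable model of `P`. -/
def SymbInterp.isAModel (Sg : SymbInterp V U PS 𝒜) (P : Set (Clause V U PS)) : Prop :=
  ∀ C ∈ P, ∀ α : Assign V U, C.constr α → Sg.bodySat C.body α → Sg.headSat C.head α

/-- `Sg` is tight on `S`: for every clause `A ← c, G` of `S`,
`Σ(A)` is equivalent to `∃X̄ (c ∧ Σ(G))`, where the variables of `A` stay free. -/
def SymbInterp.tightOn (Sg : SymbInterp V U PS 𝒜) (S : Set (Clause V U PS)) : Prop :=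
  ∀ C ∈ S, ∀ A : Atom V PS, C.head = some A →
    ∀ α : Assign V U,
      Sg.val A α ↔
        ∃ β : Assign V U, (∀ x ∈ A.varset, β x = α x) ∧ C.constr β ∧ Sg.bodySat C.body β

/-! ### The transformation rules R1–R4 -/

/-- Rule R1 (Definition): add a clause `newp(X1,…,Xk) ← c, G` where `newp` is a fresh
predicate, `c ∈ 𝒜`, `G` is a nonempty conjunction of atoms whose predicates occur
in `P0`, and `X1,…,Xk` are distinct variables occurring free in `(c, G)`. -/
def R1 (𝒜 : Set (Form V U)) (P0 P Defs P' Defs' : Set (Clause V U PS)) : Prop :=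
  ∃ (D : Clause V U PS) (A : Atom V PS),
    D.head = some A ∧ D.constr ∈ 𝒜 ∧ D.body ≠ [] ∧
    (∀ B ∈ D.body, B.pred ∈ predsOf P0) ∧
    A.pred ∉ predsOf (P0 ∪ P ∪ Defs) ∧
    A.varset ⊆ D.cvars ∪ bodyVars D.body ∧
    P' = P ∪ {D} ∧ Defs' = Defs ∪ {D}

/-- Rule R2 (Unfolding) of the atom `A` in clause `C ∈ P`, yielding `P'`:
`C` is `H ← c, G1, p(X̄), G2` and it is replaced by the clauses
`H ← c, c_j, G1, B_j, G2`, one for each (renamed-apart) clause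
`p(X̄) ← c_j, B_j` of `P` whose head predicate is `p`. -/
def R2At (C : Clause V U PS) (A : Atom V PS) (P P' : Set (Clause V U PS)) : Prop :=
  C ∈ P ∧
  ∃ (G1 G2 : List (Atom V PS)) (ren : Clause V U PS → Clause V U PS),
    C.body = G1 ++ A :: G2 ∧
    (∀ D ∈ P, D.headPred = some A.pred →
       (∃ σ : V ≃ V, ren D = D.rename σ) ∧
       (∃ K : Atom V PS, (ren D).head = some K ∧ K.pred = A.pred ∧ K.args = A.args) ∧
       (ren D).vars ∩ C.vars ⊆ A.varset) ∧
    P' = (P \ {C}) ∪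
      { E | ∃ D ∈ P, D.headPred = some A.pred ∧
            E.head = C.head ∧
            E.body = G1 ++ (ren D).body ++ G2 ∧
            ∀ α : Assign V U, E.constr α ↔ (C.constr α ∧ (ren D).constr α) }

/-- A self-unfolding: the unfolded atom has the same predicate as the head. -/
def SelfUnfolding (C : Clause V U PS) (A : Atom V PS) : Prop :=
  ∃ K : Atom V PS, C.head = some K ∧ K.pred = A.pred

/-- Rule R3 (Folding) of clause `C ∈ P` using (a variant of) the definition `D0 ∈ Defs`. -/
def R3At (𝒞 : Set (Form V U)) (C D0 : Clause V U PS)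
    (P Defs P' : Set (Clause V U PS)) : Prop :=
  C ∈ P ∧ D0 ∈ Defs ∧
  ∃ (σ : V ≃ V) (K : Atom V PS) (θ : V → V) (E : Clause V U PS)
    (G1 Q G2 : List (Atom V PS)),
    let D := D0.rename σ
    D.vars ∩ C.vars = ∅ ∧
    D.head = some K ∧
    C.body = G1 ++ Q ++ G2 ∧
    Q ≠ [] ∧
    -- (i) Q = Bθ
    Q.length = D.body.length ∧
    (∀ (i : ℕ) (h1 : i < Q.length) (h2 : i < D.body.length),
       (Q.get ⟨i, h1⟩).pred = (D.body.get ⟨i, h2⟩).pred ∧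
       (Q.get ⟨i, h1⟩).args = (D.body.get ⟨i, h2⟩).args.map θ) ∧
    -- `e` (the constraint of the folded clause `E`) is a constraint of `𝒞`
    E.constr ∈ 𝒞 ∧
    -- (ii) D ⊨ ∀ (c ↔ (e ∧ dθ))
    (∀ α : Assign V U, C.constr α ↔ (E.constr α ∧ D.constr (α ∘ θ))) ∧
    -- (iii)
    (∀ X ∈ (D.cvars ∪ bodyVars D.body) \ K.varset,
       (θ X ∉ C.cvars ∪ headVars C.head ∪ bodyVars G1 ∪ bodyVars G2) ∧
       ∀ Y ∈ D.cvars ∪ bodyVars D.body, Y ≠ X → θ X ≠ θ Y) ∧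
    E.head = C.head ∧
    (∃ hK : (K.args.map θ).Nodup,
       E.body = G1 ++ (⟨K.pred, K.args.map θ, hK⟩ : Atom V PS) :: G2) ∧
    P' = (P \ {C}) ∪ {E}

/-- Rule R4 (Constraint replacement). -/
def R4 (𝒞 : Set (Form V U)) (P P' : Set (Clause V U PS)) : Prop :=
  ∃ (hd : Option (Atom V PS)) (G : List (Atom V PS)) (cs ds : List (Clause V U PS)),
    cs ≠ [] ∧
    (∀ E ∈ cs, E ∈ P ∧ E.head = hd ∧ E.body = G) ∧
    (∀ E ∈ ds, E.head = hd ∧ E.body = G ∧ E.constr ∈ 𝒞) ∧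
    (∀ α : Assign V U,
       (∃ β : Assign V U, (∀ x ∈ headVars hd ∪ bodyVars G, β x = α x) ∧
          ∃ E ∈ cs, E.constr β) ↔
       (∃ β : Assign V U, (∀ x ∈ headVars hd ∪ bodyVars G, β x = α x) ∧
          ∃ E ∈ ds, E.constr β)) ∧
    P' = (P \ {E | E ∈ cs}) ∪ {E | E ∈ ds}

/-- One step of a transformation sequence: `(P, Defs)` is transformed into
`(P', Defs')` by one of the rules R1–R4. -/
def Step (𝒞 𝒜 : Set (Form V U)) (P0 P Defs P' Defs' : Set (Clause V U PS)) : Prop :=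
  R1 𝒜 P0 P Defs P' Defs'
  ∨ (Defs' = Defs ∧ ∃ (C : Clause V U PS) (A : Atom V PS), R2At C A P P')
  ∨ (Defs' = Defs ∧ ∃ C D0 : Clause V U PS, R3At 𝒞 C D0 P Defs P')
  ∨ (Defs' = Defs ∧ R4 𝒞 P P')

/-- A transformation sequence `P0, P1, …, Pn` over `𝒞` (with `𝒜 ⊆ 𝒞` the constraints
allowed in definitions), together with the sets `Defs_i` of introduced definitions. -/
def TransfSeq (𝒞 𝒜 : Set (Form V U)) (n : ℕ) (Ps Ds : ℕ → Set (Clause V U PS)) : Prop :=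
  Ds 0 = ∅ ∧ ∀ i < n, Step 𝒞 𝒜 (Ps 0) (Ps i) (Ds i) (Ps (i + 1)) (Ds (i + 1))

/-- Every definition of `Defs_n` is unfolded during the construction of the sequence. -/
def EveryDefUnfolded (n : ℕ) (Ps Ds : ℕ → Set (Clause V U PS)) : Prop :=
  ∀ D ∈ Ds n, ∃ i < n, ∃ A : Atom V PS, R2At D A (Ps i) (Ps (i + 1))

/-- Any length-preserving correspondence between two duplicate-free lists extends to a
permutation of the whole type. -/
lemma exists_perm_map_eq {V : Type} (l1 l2 : List V) (h1 : l1.Nodup) (h2 : l2.Nodup)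
    (hl : l1.length = l2.length) : ∃ σ : V ≃ V, l1.map σ = l2 := by
  classical
  set s : Set V := {x | x ∈ l1} with hs
  let e : {x // x ∈ l1} ≃ {x // x ∈ l2} :=
    (List.Nodup.getEquiv l1 h1).symm.trans ((finCongr hl).trans (List.Nodup.getEquiv l2 h2))
  let f : s ↪ V := ⟨fun x => (e ⟨x.1, x.2⟩ : V), by
    intro a b hab
    have := e.injective (Subtype.ext hab)
    exact Subtype.ext (congrArg Subtype.val this)⟩
  have key : ∃ g : V ≃ V, ∀ x : s, g x = f x := by
    cases finite_or_infinite V with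
    | inl hfin => exact Cardinal.extend_function_finite f ⟨Equiv.refl V⟩
    | inr hinf =>
        apply Cardinal.extend_function_of_lt f ?_ ⟨Equiv.refl V⟩
        have hsf : s.Finite := l1.finite_toSet
        exact lt_of_lt_of_le hsf.lt_aleph0 (Cardinal.aleph0_le_mk V)
  obtain ⟨g, hg⟩ := key
  refine ⟨g, ?_⟩
  apply List.ext_get (by simpa using hl)
  intro i hi1 hi2
  have hi1' : i < l1.length := by simpa using hi1
  have hmem : l1.get ⟨i, hi1'⟩ ∈ l1 := List.get_mem l1 ⟨i, hi1'⟩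
  have hgx : g (l1.get ⟨i, hi1'⟩) = f ⟨l1.get ⟨i, hi1'⟩, hmem⟩ := hg ⟨_, hmem⟩
  have hsymm : (List.Nodup.getEquiv l1 h1).symm ⟨l1.get ⟨i, hi1'⟩, hmem⟩ = ⟨i, hi1'⟩ := by
    rw [Equiv.symm_apply_eq]
    rfl
  have hfval : f ⟨l1.get ⟨i, hi1'⟩, hmem⟩ = l2.get ⟨i, hi2⟩ := by
    show ((e ⟨l1.get ⟨i, hi1'⟩, hmem⟩ : {x // x ∈ l2}) : V) = l2.get ⟨i, hi2⟩
    show (((List.Nodup.getEquiv l2 h2) ((finCongr hl) ((List.Nodup.getEquiv l1 h1).symm ⟨l1.get ⟨i, hi1'⟩, hmem⟩))) : V) = l2.get ⟨i, hi2⟩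
    rw [hsymm]
    rfl
  simp only [List.get_eq_getElem, List.getElem_map]
  exact hgx.trans hfval


/-- If `P` has an `𝒜`-definable model `Sg`, then `P` is `D`-satisfiable; in particular
the `D`-interpretation containing `p(a1,…,am)` whenever `D ⊨ Σ(p(X1,…,Xm))` under the
assignment `Xi ↦ ai` is a `D`-model of `P`. -/
theorem A_definable_model_gives_D_model
    {V U PS : Type} (𝒜 : Set (Form V U)) (P : Set (Clause V U PS))
    (Sg : SymbInterp V U PS 𝒜) (h : Sg.isAModel P) :
    IsModel (fun p as => ∀ (A : Atom V PS) (α : Assign V U),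
        A.pred = p → A.args.map α = as → Sg.val A α) P
    ∧ Satisfiable P := by
  have model : IsModel (fun p as => ∀ (A : Atom V PS) (α : Assign V U),
      A.pred = p → A.args.map α = as → Sg.val A α) P := by
    intro C hC α hc hbody
    have hb : Sg.bodySat C.body α := fun A hA => hbody A hA A α rfl rfl
    have hh := h C hC α hc hb
    match hHead : C.head with
    | none => rw [hHead] at hh; exact hh.elim
    | some H =>
      rw [hHead] at hh
      intro A' α' hp ha
      have hlen : H.args.length = A'.args.length := by
        have := congrArg List.length ha
        simpa using this.symm
      obtain ⟨σ, hσ⟩ := exists_perm_map_eq H.args A'.args H.nodup A'.nodup hlen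
      have hA'eq : A' = Atom.rename σ H := by
        obtain ⟨p', args', nd'⟩ := A'
        have h1 : p' = H.pred := hp
        have h2 : args' = H.args.map σ := hσ.symm
        subst h1; subst h2; rfl
      rw [hA'eq, Sg.rename_eq]
      refine (Sg.fvars H (α' ∘ σ) α ?_).mpr hh
      intro x hx
      obtain ⟨i, hi, rfl⟩ := List.mem_iff_getElem.mp hx
      have hi2 : i < A'.args.length := hlen ▸ hi
      have e1 := List.get_of_eq hσ ⟨i, by simpa using hi⟩
      have e2 := List.get_of_eq ha ⟨i, by simpa using hi2⟩
      simp only [List.get_eq_getElem, List.getElem_map] at e1 e2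
      show α' (σ H.args[i]) = α H.args[i]
      rw [e1]
      convert e2 using 2
  exact ⟨model, ⟨_, model⟩⟩

end CHC
end

section
/- Let P_{i+1} = P_i ∪ {D} be obtained from a CHC set P_i by the definition rule R1, where D is the clause newp(X1,…,Xk) ← c, G with newp a predicate not occurring in P_i, c ∈ A, G a nonempty conjunction of atoms whose predicates occur in P_i, and X1,…,Xk distinct variables free in (c,G). If Σ is an A-definable model of P_i that is tight on a set Defs_i of definitions (not containing newp), then the symbolic interpretation Σ' that agrees with Σ on all atoms whose predicate is different from newp and sets Σ'(newp(X1,…,Xk)) = ∃Y1…∃Ym (c ∧ Σ(G)), where {Y1,…,Ym} = Fvars(c ∧ Σ(G)) \ {X1,…,Xk}, is an A-definable model of P_{i+1} that is tight on Defs_i ∪ {D}. -/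
namespace CHC

variable {V U PS : Type}

variable {𝒜 𝒞 : Set (Form V U)}

/-- Case R1 of Theorem 4: if `P_{i+1} = P_i ∪ {D}` is obtained by the definition rule,
and `Sg` is an `𝒜`-definable model of `P_i` tight on `Defs_i` (not containing `newp`),
then the symbolic interpretation `Sg'` that agrees with `Sg` on every atom whose
predicate differs from `newp` and maps `newp(X1,…,Xk)` to `∃Y1…∃Ym (c ∧ Σ(G))` is an
`𝒜`-definable model of `P_{i+1}` tight on `Defs_i ∪ {D}`. -/
theorem definition_rule_preserves_tight_A_model
    {V U PS : Type} (𝒜 : Set (Form V U)) (h𝒜 : GoodConstraintSet 𝒜)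
    (P Defs : Set (Clause V U PS)) (D : Clause V U PS) (A : Atom V PS)
    (hhead : D.head = some A)
    (hc : D.constr ∈ 𝒜)
    (hbody : D.body ≠ [])
    (hbp : ∀ B ∈ D.body, B.pred ∈ predsOf P)
    (hfresh : A.pred ∉ predsOf P)
    (hfreshD : A.pred ∉ predsOf Defs)
    (hargs : A.varset ⊆ D.cvars ∪ bodyVars D.body)
    (Sg Sg' : SymbInterp V U PS 𝒜)
    (hmod : Sg.isAModel P) (htight : Sg.tightOn Defs)
    (hagree : ∀ B : Atom V PS, B.pred ≠ A.pred → Sg'.val B = Sg.val B)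
    (hnew : ∀ α : Assign V U, Sg'.val A α ↔
        ∃ β : Assign V U, (∀ x ∈ A.varset, β x = α x) ∧ D.constr β ∧ Sg.bodySat D.body β) :
    Sg'.isAModel (P ∪ {D}) ∧ Sg'.tightOn (Defs ∪ {D}) := by
  -- predicates of atoms in P and Defs differ from A.pred
  have hbodyD : ∀ B ∈ D.body, B.pred ≠ A.pred := by
    intro B hB heq
    exact hfresh (heq ▸ hbp B hB)
  have hbodySatEq : ∀ α, (Sg'.bodySat D.body α ↔ Sg.bodySat D.body α) := by
    intro α
    constructor <;> intro h B hB <;>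
      [rw [← hagree B (hbodyD B hB)]; rw [hagree B (hbodyD B hB)]] <;> exact h B hB
  have hP : ∀ C ∈ P, ∀ B : Atom V PS,
      ((∃ K, C.head = some K ∧ K = B) ∨ B ∈ C.body) → Sg'.val B = Sg.val B := by
    intro C hC B hB
    apply hagree
    intro heq
    apply hfresh
    refine ⟨C, hC, ?_⟩
    rcases hB with ⟨K, hK, rfl⟩ | hB
    · exact Or.inl ⟨_, hK, heq⟩
    · exact Or.inr ⟨B, hB, heq⟩
  have hDefs : ∀ C ∈ Defs, ∀ B : Atom V PS,
      ((∃ K, C.head = some K ∧ K = B) ∨ B ∈ C.body) → Sg'.val B = Sg.val B := by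
    intro C hC B hB
    apply hagree
    intro heq
    apply hfreshD
    refine ⟨C, hC, ?_⟩
    rcases hB with ⟨K, hK, rfl⟩ | hB
    · exact Or.inl ⟨_, hK, heq⟩
    · exact Or.inr ⟨B, hB, heq⟩
  constructor
  · -- model
    intro C hC α hcα hbα
    rcases hC with hC | hC
    · -- C ∈ P
      have hb : Sg.bodySat C.body α := by
        intro B hB
        rw [← hP C hC B (Or.inr hB)]
        exact hbα B hB
      have := hmod C hC α hcα hb
      cases hK : C.head with
      | none => rw [hK] at this; exact this
      | some K =>
        rw [hK] at this
        show Sg'.val K α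
        rw [hP C hC K (Or.inl ⟨K, hK, rfl⟩)]
        exact this
    · -- C = D
      rcases hC with rfl
      rw [hhead]
      show Sg'.val A α
      rw [hnew]
      exact ⟨α, fun _ _ => rfl, hcα, (hbodySatEq α).1 hbα⟩
  · -- tight
    intro C hC B hB α
    rcases hC with hC | hC
    · have h := htight C hC B hB α
      rw [hDefs C hC B (Or.inl ⟨B, hB, rfl⟩), h]
      constructor
      · rintro ⟨β, h1, h2, h3⟩
        refine ⟨β, h1, h2, fun X hX => ?_⟩
        rw [hDefs C hC X (Or.inr hX)]; exact h3 X hX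
      · rintro ⟨β, h1, h2, h3⟩
        refine ⟨β, h1, h2, fun X hX => ?_⟩
        rw [← hDefs C hC X (Or.inr hX)]; exact h3 X hX
    · rcases hC with rfl
      rw [hhead] at hB
      cases hB
      rw [hnew]
      constructor
      · rintro ⟨β, h1, h2, h3⟩
        exact ⟨β, h1, h2, (hbodySatEq β).2 h3⟩
      · rintro ⟨β, h1, h2, h3⟩
        exact ⟨β, h1, h2, (hbodySatEq β).1 h3⟩


end CHC
end

section
/- Let P_{i+1} be obtained from a CHC set P_i by unfolding (rule R2) the atom p(X1,…,Xk) in a clause C: H ← c, G1, p(X1,…,Xk), G2 of P_i, i.e., P_{i+1} = (P_i \ {C}) ∪ {H ← c, c_j, G1, B_j, G2 | j = 1,…,m}, where {p(X1,…,Xk) ← c_j, B_j | j = 1,…,m} are the renamed-apart clauses of P_i with head predicate p. Then every A-definable model Σ of P_i is also an A-definable model of P_{i+1}. -/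
namespace CHC

variable {V U PS : Type}

variable {𝒜 𝒞 : Set (Form V U)}

/-- Case R2 of Theorem 4: unfolding preserves `𝒜`-definable models: if `P'` is obtained
from `P` by unfolding the atom `A` in a clause `C` of `P`, then every `𝒜`-definable
model of `P` is an `𝒜`-definable model of `P'`. -/
theorem unfolding_preserves_A_model
    {V U PS : Type} (𝒜 : Set (Form V U))
    (P P' : Set (Clause V U PS)) (C : Clause V U PS) (A : Atom V PS)
    (h : R2At C A P P')
    (Sg : SymbInterp V U PS 𝒜) (hmod : Sg.isAModel P) :
    Sg.isAModel P' := by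
  obtain ⟨hCP, G1, G2, ren, hbody, hren, hP'⟩ := h
  intro E hE α hc hb
  rw [hP'] at hE
  rcases hE with ⟨hEP, -⟩ | ⟨D, hDP, hDhd, hEhd, hEbody, hEconstr⟩
  · exact hmod E hEP α hc hb
  · obtain ⟨⟨σ, hσ⟩, ⟨K, hK, hKpred, hKargs⟩, -⟩ := hren D hDP hDhd
    have hcC : C.constr α ∧ (ren D).constr α := (hEconstr α).1 hc
    -- α satisfies all of G1, (ren D).body, G2
    have hbAll : ∀ B ∈ G1 ++ (ren D).body ++ G2, Sg.val B α := by
      intro B hB; exact hb B (hEbody ▸ hB)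
    -- the renamed clause (ren D) holds under Sg via hmod D
    have hD : Sg.headSat (ren D).head α := by
      rw [hσ] at hcC hbAll ⊢
      have hDhold := hmod D hDP (α ∘ σ) hcC.2
      have : Sg.bodySat D.body (α ∘ σ) := by
        intro B hB
        have := hbAll (Atom.rename σ B) (by
          simp only [List.mem_append]
          exact Or.inl (Or.inr (List.mem_map_of_mem hB)))
        rwa [Sg.rename_eq] at this
      have := hDhold this
      cases hDhd' : D.head with
      | none => rw [hDhd'] at this; exact absurd this (by simp [SymbInterp.headSat])
      | some B0 =>
        rw [hDhd'] at this
        simp only [Clause.rename, hDhd', Option.map_some]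
        have := Sg.rename_eq B0 σ
        simp only [SymbInterp.headSat] at this ⊢
        rw [this]
        exact ‹Sg.val B0 (α ∘ σ)›
    -- so Sg.val K α, and K = A
    rw [hK] at hD
    have hKA : K = A := by
      cases K with
      | mk p as nd =>
        cases A with
        | mk p' as' nd' =>
          simp only [Atom.pred] at hKpred
          simp only [Atom.args] at hKargs
          subst hKpred; subst hKargs; rfl
    have hA : Sg.val A α := by rw [← hKA]; exact hD
    -- apply model of C
    have : Sg.bodySat C.body α := by
      intro B hB
      rw [hbody] at hB
      simp only [List.mem_append, List.mem_cons] at hB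
      rcases hB with h1 | h2 | h3
      · exact hbAll B (by simp [h1])
      · rw [h2]; exact hA
      · exact hbAll B (by simp [h3])
    rw [hEhd]
    exact hmod C hCP α hcC.1 this

end CHC
end

section
/- Let P_{i+1} = (P_i \ {C}) ∪ {E} be obtained from a CHC set P_i by a reversible folding (rule R3): the folded clause C: H ← c, G1, Q, G2 is replaced by E: H ← e, G1, Kθ, G2 using a definition D: K ← d, B that belongs both to Defs_i and to P_i and is different from C, where θ and e satisfy Q = Bθ, D ⊨ ∀(c ↔ (e ∧ dθ)), and every X ∈ vars(d,B) \ vars(K) is mapped by θ to a variable not occurring in {H, c, G1, G2} nor in Yθ for any other variable Y of (d,B). Then every A-definable model Σ' of P_{i+1} is also an A-definable model of P_i. -/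
namespace CHC

variable {V U PS : Type}

variable {𝒜 𝒞 : Set (Form V U)}

/-- Auxiliary: an injection (given on a duplicate-free list) extends to a permutation. -/
lemma exists_perm_extend {V : Type} (l : List V) (θ : V → V)
    (h1 : l.Nodup) (h2 : (l.map θ).Nodup) :
    ∃ σ : Equiv.Perm V, ∀ x ∈ l, σ x = θ x := by
  have : DecidableEq V := Classical.decEq V
  induction l with
  | nil => exact ⟨Equiv.refl V, by simp⟩
  | cons a l ih =>
    simp only [List.nodup_cons, List.map_cons, List.mem_map] at h1 h2
    obtain ⟨σ, hσ⟩ := ih h1.2 h2.2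
    refine ⟨(Equiv.swap a (σ.symm (θ a))).trans σ, ?_⟩
    intro x hx
    rcases List.mem_cons.1 hx with rfl | hx
    · simp [Equiv.trans_apply]
    · have hxa : x ≠ a := fun hh => h1.1 (hh ▸ hx)
      have hx2 : x ≠ σ.symm (θ a) := by
        intro hh
        have : σ x = θ a := by rw [hh]; simp
        exact h2.1 ⟨x, hx, by rw [← hσ x hx, this]⟩
      simp [Equiv.trans_apply, Equiv.swap_apply_of_ne_of_ne hxa hx2, hσ x hx]

lemma Atom.ext'' {A B : Atom V PS} (h1 : A.pred = B.pred) (h2 : A.args = B.args) :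
    A = B := by
  cases A; cases B; cases h1; cases h2; rfl

/-- Auxiliary: the value of a symbolic interpretation on an instance `Bθ` of an atom `B`
(when the result has no repeated variables) is the value on `B` precomposed with `θ`. -/
lemma SymbInterp.val_subst (Sg : SymbInterp V U PS 𝒜) (A B : Atom V PS) (θ : V → V)
    (hp : A.pred = B.pred) (ha : A.args = B.args.map θ) (α : Assign V U) :
    Sg.val A α ↔ Sg.val B (α ∘ θ) := by
  obtain ⟨σ, hσ⟩ := exists_perm_extend B.args θ B.nodup (ha ▸ A.nodup)
  have hAe : A = B.rename σ := by
    refine Atom.ext'' hp ?_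
    rw [ha]
    exact (List.map_congr_left (fun x hx => hσ x hx)).symm
  rw [hAe, Sg.rename_eq]
  exact Sg.fvars B (α ∘ σ) (α ∘ θ) (fun x hx => congrArg α (hσ x hx))

/-- Case R3 of Theorem 6: a reversible folding reflects `𝒜`-definable models: if `P'`
is obtained from `P` by folding `C` using a definition `D0 ∈ Defs` that also belongs to
`P` and is different from `C`, then every `𝒜`-definable model of `P'` is an
`𝒜`-definable model of `P`. -/
theorem reversible_folding_reflects_A_model
    {V U PS : Type} (𝒞 𝒜 : Set (Form V U))
    (P Defs P' : Set (Clause V U PS)) (C D0 : Clause V U PS)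
    (h : R3At 𝒞 C D0 P Defs P')
    (hrevP : D0 ∈ P) (hrevC : D0 ≠ C)
    (Sg' : SymbInterp V U PS 𝒜) (hmod : Sg'.isAModel P') :
    Sg'.isAModel P := by
  obtain ⟨hCP, hD0Defs, σ, K, θ, E, G1, Q, G2, hdisj, hDhead, hCbody, hQne,
    hlen, hargs, hEc, hciff, hiii, hEhead, ⟨hKnd, hEbody⟩, hP'⟩ := h
  intro B hB α hc hb
  by_cases hBC : B = C
  case neg =>
    exact hmod B (hP' ▸ Or.inl ⟨hB, hBC⟩) α hc hb
  case pos =>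
    subst hBC
    obtain ⟨hEc', hDc⟩ := (hciff α).1 hc
    -- the body of the renamed definition is satisfied under α ∘ θ
    have hbD : Sg'.bodySat (D0.rename σ).body (α ∘ θ) := by
      intro Bd hBd
      obtain ⟨⟨i, hi⟩, rfl⟩ := List.mem_iff_get.1 hBd
      have hiQ : i < Q.length := by omega
      have hQmem : Q.get ⟨i, hiQ⟩ ∈ B.body := by
        rw [hCbody]
        exact List.mem_append.2 (Or.inl (List.mem_append.2
          (Or.inr (List.get_mem _ _))))
      have hv := hb _ hQmem
      exact (Sg'.val_subst _ _ θ (hargs i hiQ hi).1 (hargs i hiQ hi).2 α).1 hv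
    -- use the clause D0 ∈ P' to establish Σ'(K)(α ∘ θ)
    have hD0P' : D0 ∈ P' := hP' ▸ Or.inl ⟨hrevP, hrevC⟩
    obtain ⟨K0, hK0, hKren⟩ : ∃ K0, D0.head = some K0 ∧ K0.rename σ = K := by
      rcases hh : D0.head with _ | K0
      · rw [show (D0.rename σ).head = D0.head.map (Atom.rename σ) from rfl, hh] at hDhead
        simp at hDhead
      · refine ⟨K0, rfl, ?_⟩
        rw [show (D0.rename σ).head = D0.head.map (Atom.rename σ) from rfl, hh] at hDhead
        exact Option.some_injective _ hDhead.symm ▸ rfl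
    have hbD0 : Sg'.bodySat D0.body ((α ∘ θ) ∘ σ) := by
      intro A0 hA0
      have hmem : A0.rename σ ∈ (D0.rename σ).body := List.mem_map_of_mem hA0
      have hv := hbD _ hmem
      rw [Sg'.rename_eq] at hv
      exact hv
    have hDc0 : D0.constr ((α ∘ θ) ∘ σ) := hDc
    have hheadD0 := hmod D0 hD0P' ((α ∘ θ) ∘ σ) hDc0 hbD0
    have hvK : Sg'.val K (α ∘ θ) := by
      rw [hK0] at hheadD0
      rw [← hKren, Sg'.rename_eq]
      exact hheadD0
    -- the body of E is satisfied under α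
    have hbE : Sg'.bodySat E.body α := by
      intro A hA
      rw [hEbody] at hA
      rcases List.mem_append.1 hA with hA1 | hA2
      · apply hb
        rw [hCbody]
        exact List.mem_append.2 (Or.inl (List.mem_append.2 (Or.inl hA1)))
      · rcases List.mem_cons.1 hA2 with rfl | hA3
        · exact (Sg'.val_subst ⟨K.pred, K.args.map θ, hKnd⟩ K θ rfl rfl α).2 hvK
        · apply hb
          rw [hCbody]
          exact List.mem_append.2 (Or.inr hA3)
    have hEP' : E ∈ P' := hP' ▸ Or.inr rfl
    have := hmod E hEP' α hEc' hbE
    rwa [hEhead] at this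


end CHC
end

section
/- Let A = C, and let P_{i+1} be obtained from a CHC set P_i by unfolding (rule R2) the atom p(X1,…,Xk) in a clause C: H ← c, G1, p(X1,…,Xk), G2 of P_i using the renamed-apart clauses {p(X1,…,Xk) ← c_j, B_j | j = 1,…,m} of P_i with head predicate p, and suppose this application is not a self-unfolding (i.e., H is false or the predicate of H is different from p). If Σ' is an A-definable model of P_{i+1}, then the symbolic interpretation Σ that agrees with Σ' on all atoms whose predicate is different from p and sets Σ(p(X1,…,Xk)) = ∃Y1…∃Yn ⋁_{j=1}^{m} (c_j ∧ Σ'(B_j)), where {Y1,…,Yn} = Fvars(⋁_{j=1}^{m}(c_j ∧ Σ'(B_j))) \ {X1,…,Xk}, is an A-definable model of P_i. -/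
namespace CHC

variable {V U PS : Type}

variable {𝒜 𝒞 : Set (Form V U)}

open Cardinal in
private lemma exists_equiv_compl' {V : Type} {s t : Set V} (hs : s.Finite)
    (e : s ≃ t) : Nonempty ((sᶜ : Set V) ≃ (tᶜ : Set V)) := by
  rw [← Cardinal.eq]
  cases finite_or_infinite V with
  | inl h =>
    exact Cardinal.mk_compl_eq_mk_compl_finite_same (Cardinal.mk_congr e)
  | inr h =>
    have hts : Finite t := Finite.of_equiv _ e (h := hs.to_subtype)
    have ht : t.Finite := Set.finite_coe_iff.mp hts
    exact Cardinal.mk_compl_eq_mk_compl_infinite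
      (hs.lt_aleph0.trans_le (Cardinal.aleph0_le_mk V))
      (ht.lt_aleph0.trans_le (Cardinal.aleph0_le_mk V))

private lemma exists_perm_map' {V : Type} (l1 l2 : List V) (h1 : l1.Nodup) (h2 : l2.Nodup)
    (hlen : l1.length = l2.length) : ∃ σ : V ≃ V, l2 = l1.map σ := by
  classical
  set s : Set V := {x | x ∈ l1} with hs
  set t : Set V := {x | x ∈ l2} with ht
  set e : (s : Set V) ≃ t :=
    ((h1.getEquiv l1).symm.trans ((finCongr hlen).trans (h2.getEquiv l2))) with he
  have hsf : s.Finite := Set.Finite.ofFinset l1.toFinset (by simp [hs])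
  obtain ⟨e'⟩ := exists_equiv_compl' hsf e
  refine ⟨(Equiv.Set.sumCompl s).symm.trans ((e.sumCongr e').trans (Equiv.Set.sumCompl t)), ?_⟩
  apply List.ext_get (by simp [hlen])
  intro i hi2 hi1
  have hi1' : i < l1.length := by simpa using hi1
  have hmem : l1.get ⟨i, hi1'⟩ ∈ s := by exact List.get_mem l1 ⟨i, hi1'⟩
  simp only [List.get_eq_getElem, List.getElem_map]
  rw [Equiv.trans_apply, Equiv.trans_apply]
  rw [Equiv.Set.sumCompl_symm_apply_of_mem (x := l1[i]) hmem]
  rw [Equiv.sumCongr_apply, Sum.map_inl, Equiv.Set.sumCompl_apply_inl]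
  rw [he]
  simp only [Equiv.trans_apply]
  simp [List.Nodup.getEquiv, List.Nodup.idxOf_getElem, h1]

private lemma atom_ext' {V PS : Type} {A B : Atom V PS} (hp : A.pred = B.pred)
    (ha : A.args = B.args) : A = B := by
  cases A; cases B; cases hp; cases ha; rfl

/-- Case R2 of Theorem 6 (with `𝒜 = 𝒞`): a non-self-unfolding reflects `𝒜`-definable
models.  If `P'` is obtained from `P` by unfolding the atom `A` (with predicate `p`) in
clause `C` of `P` using the renamed-apart clauses of `P` with head predicate `p`, the
unfolding is not a self-unfolding, and `Sg'` is an `𝒜`-definable model of `P'`, then the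
symbolic interpretation `Sg` that agrees with `Sg'` on every atom whose predicate differs
from `p` and maps `p(X1,…,Xk)` to `∃Y1…∃Yn ⋁_j (c_j ∧ Σ'(B_j))` is an `𝒜`-definable
model of `P`.  (Every predicate is assumed to have a fixed arity: all occurrences of `p`
in `P` have the same number of arguments.) -/
theorem unfolding_reflects_A_model
    {V U PS : Type} (𝒞 : Set (Form V U))
    (P P' : Set (Clause V U PS)) (C : Clause V U PS) (A : Atom V PS)
    (G1 G2 : List (Atom V PS)) (ren : Clause V U PS → Clause V U PS)
    (hC : C ∈ P)
    (hbody : C.body = G1 ++ A :: G2)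
    (hren : ∀ D ∈ P, D.headPred = some A.pred →
       (∃ σ : V ≃ V, ren D = D.rename σ) ∧
       (∃ K : Atom V PS, (ren D).head = some K ∧ K.pred = A.pred ∧ K.args = A.args) ∧
       (ren D).vars ∩ C.vars ⊆ A.varset)
    (hP' : P' = (P \ {C}) ∪
      { E | ∃ D ∈ P, D.headPred = some A.pred ∧
            E.head = C.head ∧
            E.body = G1 ++ (ren D).body ++ G2 ∧
            ∀ α : Assign V U, E.constr α ↔ (C.constr α ∧ (ren D).constr α) })
    (hnotself : ¬ SelfUnfolding C A)
    (harity : ∀ C' ∈ P, ∀ B : Atom V PS,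
       (C'.head = some B ∨ B ∈ C'.body) → B.pred = A.pred →
       B.args.length = A.args.length)
    (Sg' Sg : SymbInterp V U PS 𝒞)
    (hmod' : Sg'.isAModel P')
    (hagree : ∀ B : Atom V PS, B.pred ≠ A.pred → Sg.val B = Sg'.val B)
    (hval : ∀ α : Assign V U, Sg.val A α ↔
       ∃ β : Assign V U, (∀ x ∈ A.varset, β x = α x) ∧
         ∃ D ∈ P, D.headPred = some A.pred ∧
           (ren D).constr β ∧ Sg'.bodySat (ren D).body β) :
    Sg.isAModel P := by
  classical
  -- (1) `Σ(A) → Σ'(A)`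
  have hA2A' : ∀ α : Assign V U, Sg.val A α → Sg'.val A α := by
    intro α h
    obtain ⟨β, hβ, D, hD, hhp, hcD, hbD⟩ := (hval α).1 h
    obtain ⟨⟨σ, hσ⟩, ⟨K, hKh, hKp, hKa⟩, -⟩ := hren D hD hhp
    cases hD0 : D.head with
    | none => rw [Clause.headPred, hD0] at hhp; simp at hhp
    | some K0 =>
      have hK0p : K0.pred = A.pred := by
        rw [Clause.headPred, hD0] at hhp
        simpa using hhp
      have hDC : D ≠ C := by
        rintro rfl
        exact hnotself ⟨K0, hD0, hK0p⟩
      have hDP' : D ∈ P' := by rw [hP']; exact Or.inl ⟨hD, hDC⟩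
      have hsat := hmod' D hDP' (β ∘ σ)
        (by rw [hσ] at hcD; exact hcD)
        (by
          intro B hB
          have h3 := hbD (Atom.rename σ B)
            (by rw [hσ]; exact List.mem_map_of_mem hB)
          rw [Sg'.rename_eq] at h3
          exact h3)
      rw [hD0] at hsat
      have hvK0 : Sg'.val K0 (β ∘ σ) := hsat
      have hKeq : Atom.rename σ K0 = K := by
        rw [hσ] at hKh
        simp only [Clause.rename, hD0, Option.map_some] at hKh
        exact Option.some.inj hKh
      have hKA : Atom.rename σ K0 = A := by
        rw [hKeq]; exact atom_ext' hKp hKa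
      have hvA : Sg'.val A β := by
        rw [← hKA, Sg'.rename_eq]
        exact hvK0
      exact (Sg'.fvars A β α (fun x hx => hβ x hx)).1 hvA
  -- (2) transfer for any atom with predicate `p` (same arity)
  have hB2B' : ∀ B : Atom V PS, B.pred = A.pred → B.args.length = A.args.length →
      ∀ α : Assign V U, Sg.val B α → Sg'.val B α := by
    intro B hp hlen α h
    obtain ⟨σ, hmap⟩ := exists_perm_map' A.args B.args A.nodup B.nodup hlen.symm
    have hBA : B = Atom.rename σ A := atom_ext' hp hmap
    rw [hBA] at h ⊢
    rw [Sg.rename_eq] at h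
    rw [Sg'.rename_eq]
    exact hA2A' _ h
  -- (3) transfer for any body atom of a clause of `P`
  have hbody2 : ∀ C' ∈ P, ∀ B ∈ C'.body, ∀ α : Assign V U,
      Sg.val B α → Sg'.val B α := by
    intro C' hC' B hB α h
    by_cases hp : B.pred = A.pred
    · exact hB2B' B hp (harity C' hC' B (Or.inr hB) hp) α h
    · rw [← hagree B hp]; exact h
  -- main proof
  intro C' hC' α hc hb
  by_cases hCC : C' = C
  · subst hCC
    have hAmem : A ∈ C'.body := by rw [hbody]; simp
    obtain ⟨β, hβ, D, hD, hhp, hcD, hbD⟩ := (hval α).1 (hb A hAmem)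
    obtain ⟨⟨σ, hσ⟩, ⟨K, hKh, hKp, hKa⟩, hsub⟩ := hren D hD hhp
    set γ : Assign V U := fun x => if x ∈ (ren D).vars then β x else α x with hγ
    have hγα : ∀ x ∈ C'.vars, γ x = α x := by
      intro x hx
      by_cases hx2 : x ∈ (ren D).vars
      · rw [hγ]; simp only [hx2, if_true]
        exact hβ x (hsub ⟨hx2, hx⟩)
      · rw [hγ]; simp only [hx2, if_false]
    have hγβ : ∀ x ∈ (ren D).vars, γ x = β x := by
      intro x hx; rw [hγ]; simp only [hx, if_true]
    let E : Clause V U PS :=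
      { head := C'.head,
        constr := fun δ => C'.constr δ ∧ (ren D).constr δ,
        cvars := C'.cvars ∪ (ren D).cvars,
        hdep := fun α' β' hag => and_congr
          (C'.hdep α' β' fun x hx => hag x (Or.inl hx))
          ((ren D).hdep α' β' fun x hx => hag x (Or.inr hx)),
        body := G1 ++ (ren D).body ++ G2 }
    have hEP' : E ∈ P' := by
      rw [hP']; exact Or.inr ⟨D, hD, hhp, rfl, rfl, fun _ => Iff.rfl⟩
    have hEsat := hmod' E hEP' γ
      (⟨(C'.hdep γ α (fun x hx => hγα x (Or.inl (Or.inl hx)))).2 hc,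
        ((ren D).hdep γ β (fun x hx => hγβ x (Or.inl (Or.inl hx)))).2 hcD⟩)
      (by
        intro B hBE
        have hBE' : B ∈ (G1 ++ (ren D).body) ++ G2 := hBE
        rcases List.mem_append.1 hBE' with hBl | hBg2
        · rcases List.mem_append.1 hBl with hBg1 | hBrd
          · have hBC : B ∈ C'.body := by
              rw [hbody]; exact List.mem_append.2 (Or.inl hBg1)
            have h4 : Sg'.val B α := hbody2 C' hC' B hBC α (hb B hBC)
            exact (Sg'.fvars B α γ
              (fun x hx => (hγα x (Or.inr ⟨B, hBC, hx⟩)).symm)).1 h4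
          · have h4 : Sg'.val B β := hbD B hBrd
            exact (Sg'.fvars B β γ
              (fun x hx => (hγβ x (Or.inr ⟨B, hBrd, hx⟩)).symm)).1 h4
        · have hBC : B ∈ C'.body := by
            rw [hbody]
            exact List.mem_append.2 (Or.inr (List.mem_cons_of_mem _ hBg2))
          have h4 : Sg'.val B α := hbody2 C' hC' B hBC α (hb B hBC)
          exact (Sg'.fvars B α γ
            (fun x hx => (hγα x (Or.inr ⟨B, hBC, hx⟩)).symm)).1 h4)
    have hEsat' : Sg'.headSat C'.head γ := hEsat
    cases hh : C'.head with
    | none => rw [hh] at hEsat'; exact hEsat'.elim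
    | some K' =>
      rw [hh] at hEsat'
      have hvK' : Sg'.val K' γ := hEsat'
      have hK'p : K'.pred ≠ A.pred := fun hcon => hnotself ⟨K', hh, hcon⟩
      have hvK'α : Sg'.val K' α := (Sg'.fvars K' γ α
        (fun x hx => hγα x (Or.inl (Or.inr (by rw [hh]; exact hx))))).1 hvK'
      show Sg.val K' α
      rw [hagree K' hK'p]
      exact hvK'α
  · have hC'P' : C' ∈ P' := by rw [hP']; exact Or.inl ⟨hC', hCC⟩
    have hb' : Sg'.bodySat C'.body α := fun B hB => hbody2 C' hC' B hB α (hb B hB)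
    have hsat := hmod' C' hC'P' α hc hb'
    cases hh : C'.head with
    | none => rw [hh] at hsat; exact hsat.elim
    | some K =>
      rw [hh] at hsat
      have hvK : Sg'.val K α := hsat
      show Sg.val K α
      by_cases hKp : K.pred = A.pred
      · have hhp : C'.headPred = some A.pred := by
          rw [Clause.headPred, hh]; simp [hKp]
        obtain ⟨⟨σ, hσ⟩, ⟨K', hK'h, hK'p, hK'a⟩, -⟩ := hren C' hC' hhp
        have hKren : Atom.rename σ K = K' := by
          rw [hσ] at hK'h
          simp only [Clause.rename, hh, Option.map_some] at hK'h
          exact Option.some.inj hK'h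
        have hKargs : K.args.map σ = A.args := by
          rw [← hK'a, ← hKren]; rfl
        have hKA : K = Atom.rename σ.symm A := by
          refine atom_ext' (show K.pred = (Atom.rename σ.symm A).pred from hKp) ?_
          show K.args = A.args.map σ.symm
          rw [← hKargs, List.map_map]
          simp
        rw [hKA, Sg.rename_eq]
        show Sg.val A (α ∘ σ.symm)
        apply (hval (α ∘ σ.symm)).2
        refine ⟨α ∘ σ.symm, fun x _ => rfl, C', hC', hhp, ?_, ?_⟩
        · rw [hσ]
          show C'.constr ((α ∘ σ.symm) ∘ ⇑σ)
          have hcomp : (α ∘ σ.symm) ∘ ⇑σ = α := by funext x; simp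
          rw [hcomp]; exact hc
        · intro B hB
          rw [hσ] at hB
          have hB' : B ∈ C'.body.map (Atom.rename σ) := hB
          obtain ⟨B0, hB0, rfl⟩ := List.mem_map.1 hB'
          rw [Sg'.rename_eq]
          show Sg'.val B0 ((α ∘ σ.symm) ∘ ⇑σ)
          have hcomp : (α ∘ σ.symm) ∘ ⇑σ = α := by funext x; simp
          rw [hcomp]; exact hb' B0 hB0
      · rw [hagree K hKp]; exact hvK


end CHC
end
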